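/- Let μ be a K-valued measure on 𝓡, let A ⊆ X be any subset, let ε > 0 be real and let B, B' ∈ 𝓡 be two ε-approximations of A, i.e. N_μ(x) ≤ ε for all x in the symmetric difference A Δ B and N_μ(x) ≤ ε for all x in A Δ B'. Then ‖μ(B) − μ(B')‖ ≤ ε. (In particular, the value of the extended measure on an approximable set is well defined as a limit.) -/

import Mathlib

/-!
Only the difference `μ (B \ B') - μ (B' \ B)` matters, and every point of `B \ B'` or `B' \ B`
has `N_μ ≤ ε`, since it lies in `A Δ B` or in `A Δ B'`. So it suffices that `‖μ C‖ ≤ ε` whenever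
every point of `C ∈ 𝓡` has `N_μ ≤ ε`. Fix `δ > 0` and cover each `x ∈ C` by some `A_x ∈ 𝓡` with
`‖A_x‖_μ < ε + δ`. The sets `C \ (A_{x₁} ∪ … ∪ A_{xₙ})` are closed under intersection and have
empty intersection, so by continuity one of them has measure `< δ`; the part of `C` inside the
finite union has measure `≤ ε + δ` by the strong triangle inequality, hence `‖μ C‖ ≤ ε + δ`.
-/

/-- A covering and separating ring of subsets of `X`. -/
structure IsSepSetRing {X : Type*} (R : Set (Set X)) : Prop where
  empty_mem : (∅ : Set X) ∈ R
  union_mem : ∀ ⦃A B : Set X⦄, A ∈ R → B ∈ R → A ∪ B ∈ R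
  diff_mem : ∀ ⦃A B : Set X⦄, A ∈ R → B ∈ R → A \ B ∈ R
  covering : ∀ x : X, ∃ A ∈ R, x ∈ A
  separating : ∀ a b : X, a ≠ b → ∃ A ∈ R, a ∈ A ∧ b ∉ A

/-- A `K`-valued measure on a ring of sets `R`. -/
structure IsNAMeasure {X : Type*} {K : Type*} [NontriviallyNormedField K]
    (R : Set (Set X)) (μ : Set X → K) : Prop where
  additive : ∀ ⦃A B : Set X⦄, A ∈ R → B ∈ R → Disjoint A B → μ (A ∪ B) = μ A + μ B
  bounded : ∀ A ∈ R, BddAbove {r : ℝ | ∃ B ∈ R, B ⊆ A ∧ r = ‖μ B‖}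
  continuity : ∀ R₀ ⊆ R, R₀.Nonempty → (∀ A ∈ R₀, ∀ B ∈ R₀, A ∩ B ∈ R₀) →
    ⋂₀ R₀ = ∅ → ∀ ε : ℝ, 0 < ε → ∃ A ∈ R₀, ‖μ A‖ < ε

/-- `‖A‖_μ`, the supremum of `‖μ B‖` over measurable `B ⊆ A`. -/
noncomputable def mSetNorm {X : Type*} {K : Type*} [NontriviallyNormedField K]
    (R : Set (Set X)) (μ : Set X → K) (A : Set X) : ℝ :=
  sSup {r : ℝ | ∃ B ∈ R, B ⊆ A ∧ r = ‖μ B‖}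

/-- The norm function `N_μ(x)`, the infimum of `‖A‖_μ` over measurable `A ∋ x`. -/
noncomputable def mNormFn {X : Type*} {K : Type*} [NontriviallyNormedField K]
    (R : Set (Set X)) (μ : Set X → K) (x : X) : ℝ :=
  sInf {r : ℝ | ∃ A ∈ R, x ∈ A ∧ r = mSetNorm R μ A}

/-- The extended (completed) ring `R_μ` of `μ`-approximable sets. -/
def extRing {X : Type*} {K : Type*} [NontriviallyNormedField K]
    (R : Set (Set X)) (μ : Set X → K) : Set (Set X) :=
  {A : Set X | ∀ ε : ℝ, 0 < ε → ∃ B ∈ R, ∀ x ∈ (A ∪ B) \ (A ∩ B), mNormFn R μ x ≤ ε}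

open Set
open scoped symmDiff

namespace IsSepSetRing

variable {X : Type*} {R : Set (Set X)}

lemma inter_mem (hR : IsSepSetRing R) {A B : Set X} (hA : A ∈ R) (hB : B ∈ R) : A ∩ B ∈ R := by
  rw [← sdiff_sdiff_right_self]
  exact hR.diff_mem hA (hR.diff_mem hA hB)

lemma biUnion_mem (hR : IsSepSetRing R) {ι : Type*} {f : ι → Set X} (hf : ∀ i, f i ∈ R)
    (s : Finset ι) : (⋃ i ∈ s, f i) ∈ R := by
  classical
  induction s using Finset.induction_on with
  | empty => simpa using hR.empty_mem
  | insert a t _ ih =>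
    rw [Finset.set_biUnion_insert]
    exact hR.union_mem (hf a) ih

end IsSepSetRing

namespace IsNAMeasure

variable {X K : Type*} [NontriviallyNormedField K] {R : Set (Set X)} {μ : Set X → K}

lemma map_empty (hR : IsSepSetRing R) (hμ : IsNAMeasure R μ) : μ ∅ = 0 := by
  have h := hμ.additive hR.empty_mem hR.empty_mem (disjoint_empty ∅)
  rw [union_empty] at h
  exact add_eq_left.mp h.symm

lemma map_eq_diff_add_inter (hR : IsSepSetRing R) (hμ : IsNAMeasure R μ) {A B : Set X}
    (hA : A ∈ R) (hB : B ∈ R) : μ A = μ (A \ B) + μ (A ∩ B) := by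
  conv_lhs => rw [← sdiff_union_inter A B]
  exact hμ.additive (hR.diff_mem hA hB) (hR.inter_mem hA hB) disjoint_sdiff_inter

lemma norm_le_mSetNorm (hμ : IsNAMeasure R μ) {A B : Set X} (hA : A ∈ R) (hB : B ∈ R)
    (hBA : B ⊆ A) : ‖μ B‖ ≤ mSetNorm R μ A :=
  le_csSup (hμ.bounded A hA) ⟨B, hB, hBA, rfl⟩

lemma exists_mem_mSetNorm_lt (hR : IsSepSetRing R) {x : X} {r : ℝ} (hx : mNormFn R μ x < r) :
    ∃ A ∈ R, x ∈ A ∧ mSetNorm R μ A < r := by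
  obtain ⟨A₀, hA₀, hxA₀⟩ := hR.covering x
  have hne : {r : ℝ | ∃ A ∈ R, x ∈ A ∧ r = mSetNorm R μ A}.Nonempty :=
    ⟨mSetNorm R μ A₀, A₀, hA₀, hxA₀, rfl⟩
  obtain ⟨_, ⟨A, hA, hxA, rfl⟩, hAr⟩ := exists_lt_of_csInf_lt hne hx
  exact ⟨A, hA, hxA, hAr⟩

lemma exists_norm_diff_biUnion_lt (hR : IsSepSetRing R) (hμ : IsNAMeasure R μ) {C : Set X}
    (hC : C ∈ R) {f : C → Set X} (hf : ∀ i, f i ∈ R) (hmem : ∀ i, (i : X) ∈ f i)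
    {δ : ℝ} (hδ : 0 < δ) : ∃ s : Finset C, ‖μ (C \ ⋃ i ∈ s, f i)‖ < δ := by
  classical
  let R₀ : Set (Set X) := range fun s : Finset C => C \ ⋃ i ∈ s, f i
  have hR₀ : R₀ ⊆ R := by
    rintro _ ⟨s, rfl⟩
    exact hR.diff_mem hC (hR.biUnion_mem hf s)
  have hR₀_inter : ∀ D ∈ R₀, ∀ D' ∈ R₀, D ∩ D' ∈ R₀ := by
    rintro _ ⟨s, rfl⟩ _ ⟨t, rfl⟩
    exact ⟨s ∪ t, by simp only [Finset.set_biUnion_union, sdiff_inter_sdiff]⟩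
  have hR₀_sInter : ⋂₀ R₀ = ∅ := by
    refine eq_empty_of_forall_notMem fun x hx => ?_
    have hxC : x ∈ C := by simpa using hx _ ⟨∅, rfl⟩
    have := hx _ ⟨{⟨x, hxC⟩}, rfl⟩
    simp only [Finset.mem_singleton, iUnion_iUnion_eq_left, mem_sdiff] at this
    exact this.2 (hmem ⟨x, hxC⟩)
  obtain ⟨_, ⟨s, rfl⟩, hs⟩ := hμ.continuity R₀ hR₀ ⟨C, ∅, by simp⟩ hR₀_inter hR₀_sInter δ hδ
  exact ⟨s, hs⟩

variable [IsUltrametricDist K]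

lemma norm_le_of_subset_biUnion (hR : IsSepSetRing R) (hμ : IsNAMeasure R μ) {ι : Type*}
    {f : ι → Set X} (hf : ∀ i, f i ∈ R) {M : ℝ} (hM : 0 ≤ M) (hfM : ∀ i, mSetNorm R μ (f i) ≤ M)
    (s : Finset ι) {E : Set X} (hE : E ∈ R) (hEs : E ⊆ ⋃ i ∈ s, f i) : ‖μ E‖ ≤ M := by
  classical
  induction s using Finset.induction_on generalizing E with
  | empty =>
    have hE_empty : E = ∅ := subset_empty_iff.mp (by simpa using hEs)
    rw [hE_empty, hμ.map_empty hR, norm_zero]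
    exact hM
  | insert a t _ ih =>
    rw [Finset.set_biUnion_insert] at hEs
    have hdiff : ‖μ (E \ f a)‖ ≤ M :=
      ih (hR.diff_mem hE (hf a)) fun x hx => (hEs hx.1).resolve_left hx.2
    have hinter : ‖μ (E ∩ f a)‖ ≤ M :=
      (hμ.norm_le_mSetNorm (hf a) (hR.inter_mem hE (hf a)) inter_subset_right).trans (hfM a)
    rw [hμ.map_eq_diff_add_inter hR hE (hf a)]
    exact (IsUltrametricDist.norm_add_le_max _ _).trans (max_le hdiff hinter)

lemma norm_le_of_forall_mNormFn_le (hR : IsSepSetRing R) (hμ : IsNAMeasure R μ) {C : Set X}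
    (hC : C ∈ R) {ε : ℝ} (hε : 0 ≤ ε) (hCε : ∀ x ∈ C, mNormFn R μ x ≤ ε) : ‖μ C‖ ≤ ε := by
  refine le_of_forall_pos_le_add fun δ hδ => ?_
  have hcover (x : C) : ∃ A ∈ R, (x : X) ∈ A ∧ mSetNorm R μ A < ε + δ :=
    exists_mem_mSetNorm_lt hR ((hCε x x.2).trans_lt (lt_add_of_pos_right ε hδ))
  choose f hf hmem hfε using hcover
  obtain ⟨s, hs⟩ := hμ.exists_norm_diff_biUnion_lt hR hC hf hmem hδ
  have hinter : ‖μ (C ∩ ⋃ i ∈ s, f i)‖ ≤ ε + δ :=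
    hμ.norm_le_of_subset_biUnion hR hf (by positivity) (fun i => (hfε i).le) s
      (hR.inter_mem hC (hR.biUnion_mem hf s)) inter_subset_right
  rw [hμ.map_eq_diff_add_inter hR hC (hR.biUnion_mem hf s)]
  exact (IsUltrametricDist.norm_add_le_max _ _).trans (max_le (by linarith) hinter)

end IsNAMeasure

theorem stmt4_general {X K : Type*} [NontriviallyNormedField K]
    (hna : ∀ x y : K, ‖x + y‖ ≤ max ‖x‖ ‖y‖)
    (R : Set (Set X)) (hR : IsSepSetRing R)
    (μ : Set X → K) (hμ : IsNAMeasure R μ)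
    (A : Set X) (ε : ℝ) (hε : 0 < ε) (B B' : Set X) (hB : B ∈ R) (hB' : B' ∈ R)
    (happroxB : ∀ x ∈ (A ∪ B) \ (A ∩ B), mNormFn R μ x ≤ ε)
    (happroxB' : ∀ x ∈ (A ∪ B') \ (A ∩ B'), mNormFn R μ x ≤ ε) :
    ‖μ B - μ B'‖ ≤ ε := by
  have := IsUltrametricDist.isUltrametricDist_of_forall_norm_add_le_max_norm hna
  have hA_symmDiff {D : Set X} (hD : ∀ x ∈ (A ∪ D) \ (A ∩ D), mNormFn R μ x ≤ ε) :
      ∀ x ∈ A ∆ D, mNormFn R μ x ≤ ε := by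
    rwa [symmDiff_eq_sup_sdiff_inf]
  have hN : ∀ x ∈ B ∆ B', mNormFn R μ x ≤ ε := fun x hx =>
    (symmDiff_triangle B A B' hx).elim
      (fun h => hA_symmDiff happroxB x (symmDiff_comm B A ▸ h)) (hA_symmDiff happroxB' x)
  have hdiff : ‖μ (B \ B')‖ ≤ ε := hμ.norm_le_of_forall_mNormFn_le hR (hR.diff_mem hB hB')
    hε.le fun x hx => hN x (Or.inl hx)
  have hdiff' : ‖μ (B' \ B)‖ ≤ ε := hμ.norm_le_of_forall_mNormFn_le hR (hR.diff_mem hB' hB)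
    hε.le fun x hx => hN x (Or.inr hx)
  have hsplit : μ B - μ B' = μ (B \ B') - μ (B' \ B) := by
    rw [hμ.map_eq_diff_add_inter hR hB hB', hμ.map_eq_diff_add_inter hR hB' hB, inter_comm B']
    ring
  rw [hsplit, sub_eq_add_neg]
  exact (IsUltrametricDist.norm_add_le_max _ _).trans (max_le hdiff (by rwa [norm_neg]))

theorem stmt4 {X K : Type*} [NontriviallyNormedField K] [CompleteSpace K]
    (hna : ∀ x y : K, ‖x + y‖ ≤ max ‖x‖ ‖y‖)
    (R : Set (Set X)) (hR : IsSepSetRing R)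
    (μ : Set X → K) (hμ : IsNAMeasure R μ)
    (A : Set X) (ε : ℝ) (hε : 0 < ε) (B B' : Set X) (hB : B ∈ R) (hB' : B' ∈ R)
    (happroxB : ∀ x ∈ (A ∪ B) \ (A ∩ B), mNormFn R μ x ≤ ε)
    (happroxB' : ∀ x ∈ (A ∪ B') \ (A ∩ B'), mNormFn R μ x ≤ ε) :
    ‖μ B - μ B'‖ ≤ ε :=
  stmt4_general hna R hR μ hμ A ε hε B B' hB hB' happroxB happroxB'
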